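/- Suppose real sequences (in expectation) satisfy the stationarity conditions: E[y_{t+1}] = E[y_t] with the update E[y_{t+1}] = E[y_t] + (ηβ/2)(δ² − E[x_t²]), and E[x_{t+1}²] = E[x_t²] with E[x_{t+1}²] = (1 + η ȳ)² E[x_t²] + η² σ², where ȳ := E[y_t]. Then E[x_t²] = δ², and if ȳ ∈ (−1/η, 0] and δ² = 2α/β, then ȳ = −(η σ²)/(2δ²) · 1/(1 + ηȳ/2) ; in particular, to first order in η, ȳ = −η β σ²/(4α) + O(η² ȳ² / δ²). -/
import Mathlib


/-- **Stationarity conditions determine the sharpness gap.** If the expected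
dynamics satisfy mean stationarity of `y` with update
`E[y_{t+1}] = E[y_t] + (ηβ/2)(δ² − E[x_t²])`, and second-moment stationarity of
`x` with update `E[x_{t+1}²] = (1+ηȳ)² E[x_t²] + η² σ²`, then `E[x_t²] = δ²`;
and if `ȳ ∈ (−1/η, 0]` and `δ² = 2α/β`, then
`ȳ = −(ησ²)/(2δ²) · 1/(1+ηȳ/2)`, i.e. exactly
`ȳ = −ηβσ²/(4α) − ηȳ²/2` (which is `−ηβσ²/(4α)` to first order in `η`). -/
theorem stationarity_sharpness_gap (η β α δ σ : ℝ)
    (hη : 0 < η) (hβ : 0 < β) (hα : 0 < α) (hδ : 0 < δ) (hσ : 0 < σ)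
    (hδ2 : δ ^ 2 = 2 * α / β)
    (Ey Ex2 : ℕ → ℝ) (ybar : ℝ)
    (hybar : ∀ t, Ey t = ybar)
    (hystat : ∀ t, Ey (t + 1) = Ey t)
    (hyupd : ∀ t, Ey (t + 1) = Ey t + (η * β / 2) * (δ ^ 2 - Ex2 t))
    (hxstat : ∀ t, Ex2 (t + 1) = Ex2 t)
    (hxupd : ∀ t, Ex2 (t + 1) = (1 + η * ybar) ^ 2 * Ex2 t + η ^ 2 * σ ^ 2) :
    (∀ t, Ex2 t = δ ^ 2) ∧
    (ybar ∈ Set.Ioc (-(1 / η)) 0 →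
      ybar = -(η * σ ^ 2) / (2 * δ ^ 2) * (1 / (1 + η * ybar / 2)) ∧
      ybar = -(η * β * σ ^ 2) / (4 * α) - η * ybar ^ 2 / 2) := by
  have hEx : ∀ t, Ex2 t = δ ^ 2 := by
    intro t
    have h1 := hyupd t
    rw [hystat t] at h1
    have h2 : (η * β / 2) * (δ ^ 2 - Ex2 t) = 0 := by linarith
    have hne : η * β / 2 ≠ 0 := by positivity
    have := (mul_eq_zero.mp h2).resolve_left hne
    linarith
  refine ⟨hEx, fun hy => ?_⟩
  obtain ⟨hy1, hy2⟩ := hy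
  have key : δ ^ 2 = (1 + η * ybar) ^ 2 * δ ^ 2 + η ^ 2 * σ ^ 2 := by
    have h := hxupd 0
    rw [hxstat 0] at h
    rw [hEx 0] at h
    exact h
  have hηy : -1 < η * ybar := by
    have h := (div_lt_iff₀ hη).mp (by rw [neg_div]; exact hy1 : -(1)/η < ybar)
    nlinarith
  have hden : (0:ℝ) < 1 + η * ybar / 2 := by linarith
  have hmain : ybar * (2 * δ ^ 2) * (1 + η * ybar / 2) = -(η * σ ^ 2) := by
    apply mul_left_cancel₀ hη.ne'
    ring_nf
    nlinarith [key]
  have hδ2pos : (0:ℝ) < δ ^ 2 := by positivity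
  constructor
  · rw [div_mul_div_comm, mul_one, eq_div_iff (by positivity)]
    linear_combination hmain
  · have hδβ : δ ^ 2 * β = 2 * α := by
      rw [hδ2]; field_simp
    field_simp
    nlinarith [hmain, hδβ]
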